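/- arXiv:1911.07591 — 8 statements merged into one kernel-verified Lean document; each statement's English description precedes it below -/
import Mathlib

section
/- In a G-MAPT, if a state s enables two transitions t1 = (l1,f1,I1,l1') of agent A_i and t2 = (l2,f2,I2,l2') of agent A_j with i ≠ j, leading to states s1 and s2 respectively, then s1 enables t2 (leading to some state s3) and s2 enables t1 (leading to some state s4); moreover s3 = s4 if and only if f1 ∘ f2 (v) = f2 ∘ f1 (v), where v is the shared-variable value in s. -/
structure ATrans (Val Loc : Type) where
  src : Loc
  f : Val → Val
  lo : ℕ
  hi : ℕ
  dst : Loc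

structure MState (n : ℕ) (Val Loc : Type) where
  loc : Fin n → Loc
  clock : Fin n → ℕ
  v : Val

structure GMAPT (n : ℕ) (Val Loc : Type) where
  trans : Fin n → Set (ATrans Val Loc)
  initLoc : Fin n → Loc
  finalLoc : Fin n → Loc
  period : Fin n → ℕ
  period_pos : ∀ i, 0 < period i
  initState : MState n Val Loc


variable {n : ℕ} {Val Loc : Type}


/-- A transition `t` of agent `i` is enabled at state `s`. -/
def TransEnabled (M : GMAPT n Val Loc) (i : Fin n) (t : ATrans Val Loc)
    (s : MState n Val Loc) : Prop :=
  t ∈ M.trans i ∧ s.loc i = t.src ∧ t.lo ≤ s.clock i ∧ s.clock i ≤ t.hi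

/-- Firing a transition updates the locality of agent `i` and the shared variable. -/
def fireTrans (i : Fin n) (t : ATrans Val Loc) (s : MState n Val Loc) : MState n Val Loc :=
  { loc := Function.update s.loc i t.dst, clock := s.clock, v := t.f s.v }

/-- The reset of agent `i` is enabled at `s`. -/
def ResetEnabled (M : GMAPT n Val Loc) (i : Fin n) (s : MState n Val Loc) : Prop :=
  s.loc i = M.finalLoc i ∧ s.clock i = M.period i

/-- Firing a reset sends agent `i` back to its initial locality with clock 0. -/
def fireReset (M : GMAPT n Val Loc) (i : Fin n) (s : MState n Val Loc) : MState n Val Loc :=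
  { loc := Function.update s.loc i (M.initLoc i),
    clock := Function.update s.clock i 0, v := s.v }

/-- Time may increase at `s`. -/
def TimeEnabled (M : GMAPT n Val Loc) (s : MState n Val Loc) : Prop :=
  ∀ i, (∃ t ∈ M.trans i, s.loc i = t.src ∧ s.clock i < t.hi) ∨
    (s.loc i = M.finalLoc i ∧ s.clock i < M.period i)

/-- A unit time increase. -/
def tickState (s : MState n Val Loc) : MState n Val Loc :=
  { loc := s.loc, clock := fun i => s.clock i + 1, v := s.v }

/-- One step of the (original) semantics of a G-MAPT. -/
inductive Step (M : GMAPT n Val Loc) : MState n Val Loc → MState n Val Loc → Prop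
  | trans (i : Fin n) (t : ATrans Val Loc) (s : MState n Val Loc) :
      TransEnabled M i t s → Step M s (fireTrans i t s)
  | reset (i : Fin n) (s : MState n Val Loc) :
      ResetEnabled M i s → Step M s (fireReset M i s)
  | time (s : MState n Val Loc) : TimeEnabled M s → Step M s (tickState s)

/-- A state is reachable if some sequence of steps leads to it from the initial state. -/
def Reachable (M : GMAPT n Val Loc) (s : MState n Val Loc) : Prop :=
  Relation.ReflTransGen (Step M) M.initState s


/-- transitions of distinct agents enabled at a common state can be fired
  in either order, and the two orders lead to the same state iff the two variable
  transformations commute on the current value of the shared variable. -/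
theorem stmt0 (M : GMAPT n Val Loc) (i j : Fin n) (hij : i ≠ j)
    (t1 t2 : ATrans Val Loc) (s : MState n Val Loc)
    (h1 : TransEnabled M i t1 s) (h2 : TransEnabled M j t2 s) :
    TransEnabled M j t2 (fireTrans i t1 s) ∧
    TransEnabled M i t1 (fireTrans j t2 s) ∧
    (fireTrans j t2 (fireTrans i t1 s) = fireTrans i t1 (fireTrans j t2 s) ↔
      t1.f (t2.f s.v) = t2.f (t1.f s.v)) := by
  obtain ⟨m1, l1, lo1, hi1⟩ := h1
  obtain ⟨m2, l2, lo2, hi2⟩ := h2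
  refine ⟨⟨m2, ?_, lo2, hi2⟩, ⟨m1, ?_, lo1, hi1⟩, ?_⟩
  · simp [fireTrans, Function.update_of_ne hij.symm, l2]
  · simp [fireTrans, Function.update_of_ne hij, l1]
  · constructor
    · intro h
      have := congrArg MState.v h
      simpa [fireTrans] using this.symm
    · intro h
      simp only [fireTrans, MState.mk.injEq]
      refine ⟨?_, trivial, h.symm⟩
      ext k
      by_cases hk : k = i
      · subst hk; simp [Function.update_of_ne hij, Function.update_self]
      · by_cases hk2 : k = j
        · subst hk2; simp [Function.update_of_ne hij.symm, Function.update_self]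
        · simp [Function.update_of_ne hk, Function.update_of_ne hk2]
end

section
/- In a G-MAPT, if a state s enables a transition t = (l,f,I,l') of agent A_i and also enables a clock reset of agent A_j, leading to states s1 and s2 respectively, then necessarily i ≠ j, s1 enables the reset of A_j leading to a state s3, s2 enables t, and firing t from s2 also leads to s3 (the diamond commutes exactly). -/
variable {n : ℕ} {Val Loc : Type}


/-- a transition and a reset simultaneously enabled belong to distinct
  agents, and they can be fired in either order, both orders leading to the same state. -/
theorem stmt1 (M : GMAPT n Val Loc)
    (hfin : ∀ k : Fin n, ∀ t' ∈ M.trans k, t'.src ≠ M.finalLoc k)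
    (i j : Fin n) (t : ATrans Val Loc) (s : MState n Val Loc)
    (ht : TransEnabled M i t s) (hr : ResetEnabled M j s) :
    i ≠ j ∧
    ResetEnabled M j (fireTrans i t s) ∧
    TransEnabled M i t (fireReset M j s) ∧
    fireReset M j (fireTrans i t s) = fireTrans i t (fireReset M j s) := by
  obtain ⟨hmem, hsrc, hlo, hhi⟩ := ht
  obtain ⟨hrl, hrc⟩ := hr
  have hij : i ≠ j := by
    rintro rfl
    exact hfin i t hmem (hsrc ▸ hrl)
  refine ⟨hij, ⟨?_, hrc⟩, ⟨hmem, ?_, ?_, ?_⟩, ?_⟩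
  · simp [fireTrans, Function.update_of_ne (Ne.symm hij), hrl]
  · simp [fireReset, Function.update_of_ne hij, hsrc]
  · simp [fireReset, Function.update_of_ne hij, hlo]
  · simp [fireReset, Function.update_of_ne hij, hhi]
  · simp only [fireReset, fireTrans]
    refine MState.mk.injEq .. ▸ ⟨?_, rfl, rfl⟩
    exact Function.update_comm hij _ _ _
end

section
/- A G-MAPT satisfying the acyclicity constraint (Constraint 2) has an acyclic state space: no nonempty sequence of transition firings, resets, and time increases returns to a previously visited state. -/
variable {n : ℕ} {Val Loc : Type}


/-- A path of transitions of agent `i` from a locality to another. -/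
def AgentPath (M : GMAPT n Val Loc) (i : Fin n) :
    List (ATrans Val Loc) → Loc → Loc → Prop
  | [], l, l' => l = l'
  | t :: p, l, l' => t ∈ M.trans i ∧ t.src = l ∧ AgentPath M i p t.dst l'

/-- The transition graph of every agent is acyclic. -/
def AgentsAcyclic (M : GMAPT n Val Loc) : Prop :=
  ∀ i l p, p ≠ [] → ¬ AgentPath M i p l l

/-- Constraint 2 (acyclicity): `Val = W × X`, some agent increases the `X`-component
  on every path from its initial to its final locality, and no function ever
  decreases the `X`-component. -/
def XGrowth {W X : Type} [LinearOrder X] (M : GMAPT n (W × X) Loc) : Prop :=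
  (∃ i, ∀ p, AgentPath M i p (M.initLoc i) (M.finalLoc i) →
    ∃ t ∈ p, ∀ v : W × X, v.2 < (t.f v).2) ∧
  (∀ i, ∀ t ∈ M.trans i, ∀ v : W × X, v.2 ≤ (t.f v).2)

namespace Relation

variable {α β : Type*} {R P : α → α → Prop} {a b : α}

theorem ReflTransGen.le_of_monotone [Preorder β] {f : α → β} (hf : ∀ x y, R x y → f x ≤ f y)
    (h : ReflTransGen R a b) : f a ≤ f b := by
  have := h.lift f hf
  rwa [reflTransGen_eq_self] at this

theorem ReflTransGen.restrict_eq_of_monotone [PartialOrder β] {f : α → β}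
    (hf : ∀ x y, R x y → f x ≤ f y) (h : ReflTransGen R a b) (hba : f b ≤ f a) :
    ReflTransGen (fun x y => R x y ∧ f x = f y) a b := by
  induction h using ReflTransGen.head_induction_on with
  | refl => exact .refl
  | @head a c hac hcb ih =>
    have hac' : f a = f c := le_antisymm (hf _ _ hac) ((hcb.le_of_monotone hf).trans hba)
    exact .head ⟨hac, hac'⟩ (ih (hac' ▸ hba))

theorem TransGen.restrict_eq_of_monotone [PartialOrder β] {f : α → β}
    (hf : ∀ x y, R x y → f x ≤ f y) (h : TransGen R a a) :
    TransGen (fun x y => R x y ∧ f x = f y) a a := by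
  obtain ⟨c, hac, hca⟩ := TransGen.head'_iff.mp h
  have hac' : f a = f c := le_antisymm (hf _ _ hac) (hca.le_of_monotone hf)
  exact .head' ⟨hac, hac'⟩ (hca.restrict_eq_of_monotone hf hac'.le)

theorem ReflTransGen.avoid_or_exists_last (h : ReflTransGen R a b) :
    ReflTransGen (fun x y => R x y ∧ ¬ P x y) a b ∨
      ∃ x x', ReflTransGen R a x ∧ P x x' ∧ ReflTransGen (fun x y => R x y ∧ ¬ P x y) x' b := by
  induction h with
  | refl => exact .inl .refl
  | @tail c d hac hcd ih =>
    by_cases hP : P c d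
    · exact .inr ⟨c, d, hac, hP, .refl⟩
    · rcases ih with hfree | ⟨x, x', hax, hx, hfree⟩
      · exact .inl (hfree.tail ⟨hcd, hP⟩)
      · exact .inr ⟨x, x', hax, hx, hfree.tail ⟨hcd, hP⟩⟩

theorem TransGen.avoid_or_exists_between (h : TransGen R a a) :
    TransGen (fun x y => R x y ∧ ¬ P x y) a a ∨
      ∃ x x' y y', P x x' ∧ ReflTransGen (fun x y => R x y ∧ ¬ P x y) x' y ∧ P y y' := by
  have between {x x'} (hx : P x x') (hx'x : ReflTransGen R x' x) :
      ∃ x x' y y', P x x' ∧ ReflTransGen (fun x y => R x y ∧ ¬ P x y) x' y ∧ P y y' := by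
    rcases hx'x.avoid_or_exists_last (P := P) with hfree | ⟨z, z', -, hz, hfree⟩
    · exact ⟨x, x', x, x', hx, hfree, hx⟩
    · exact ⟨z, z', x, x', hz, hfree, hx⟩
  obtain ⟨c, hac, hca⟩ := TransGen.head'_iff.mp h
  by_cases hP : P a c
  · exact .inr (between hP hca)
  rcases hca.avoid_or_exists_last (P := P) with hfree | ⟨x, x', hcx, hx, hfree⟩
  · exact .inl (.head' ⟨hac, hP⟩ hfree)
  · have hx'a : ReflTransGen R x' a := ReflTransGen.mono (fun _ _ h => h.1) _ _ hfree
    exact .inr (between hx (hx'a.trans (.head hac hcx)))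

end Relation

open Relation

section GMAPT

variable {M : GMAPT n Val Loc} {i : Fin n} {x y a b : MState n Val Loc}

def IsReset (M : GMAPT n Val Loc) (i : Fin n) (x y : MState n Val Loc) : Prop :=
  ResetEnabled M i x ∧ y = fireReset M i x

def IsFiring (M : GMAPT n Val Loc) (x y : MState n Val Loc) : Prop :=
  ∃ i t, TransEnabled M i t x ∧ y = fireTrans i t x

theorem IsReset.loc_eq (h : IsReset M i x y) : y.loc i = M.initLoc i := by
  simp [h.2, fireReset]

theorem IsReset.clock_ne (h : IsReset M i x y) : x.clock i ≠ y.clock i := by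
  simp [h.2, fireReset, h.1.2, (M.period_pos i).ne']

theorem Step.loc_eq_or_fireTrans (h : Step M x y) (hi : ¬ IsReset M i x y) :
    y.loc i = x.loc i ∨ ∃ t, TransEnabled M i t x ∧ y = fireTrans i t x := by
  cases h with
  | trans j t _ ht =>
    by_cases hj : j = i
    · exact .inr ⟨t, hj ▸ ht, hj ▸ rfl⟩
    · exact .inl (Function.update_of_ne (Ne.symm hj) _ _)
  | reset j _ hr =>
    by_cases hj : j = i
    · exact absurd ⟨hj ▸ hr, hj ▸ rfl⟩ hi
    · exact .inl (Function.update_of_ne (Ne.symm hj) _ _)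
  | time => exact .inl rfl

theorem exists_agentPath_of_reflTransGen {R : MState n Val Loc → MState n Val Loc → Prop}
    (hR : ∀ x y, R x y → Step M x y ∧ ¬ IsReset M i x y) (h : ReflTransGen R a b) :
    ∃ p, AgentPath M i p (a.loc i) (b.loc i) ∧ ∀ t ∈ p, ∃ x, R x (fireTrans i t x) := by
  induction h using ReflTransGen.head_induction_on with
  | refl => exact ⟨[], rfl, by simp⟩
  | @head a c hac _ ih =>
    obtain ⟨p, hp, hpR⟩ := ih
    rcases (hR a c hac).1.loc_eq_or_fireTrans (hR a c hac).2 with hloc | ⟨t, ht, rfl⟩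
    · exact ⟨p, hloc ▸ hp, hpR⟩
    · refine ⟨t :: p, ⟨ht.1, ht.2.1.symm, by simpa [fireTrans] using hp⟩, ?_⟩
      rintro t' (_ | ⟨_, ht'⟩)
      exacts [⟨a, hac⟩, hpR t' ht']

theorem Step.clock_le (h : Step M x y) (hi : ¬ IsReset M i x y) : x.clock i ≤ y.clock i := by
  cases h with
  | trans => exact le_rfl
  | reset j _ hr =>
    by_cases hj : j = i
    · exact absurd ⟨hj ▸ hr, hj ▸ rfl⟩ hi
    · exact (Function.update_of_ne (Ne.symm hj) _ _).ge
  | time => exact Nat.le_succ _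

theorem Step.clock_antitone (h : Step M x y) (hi : x.clock i = y.clock i) :
    y.clock ≤ x.clock := by
  cases h with
  | trans => exact le_rfl
  | reset j => exact update_le_self_iff.mpr (Nat.zero_le _)
  | time => exact absurd hi (Nat.succ_ne_self _).symm

theorem Step.isFiring_of_clock_eq [NeZero n] (h : Step M x y) (hc : x.clock = y.clock) :
    IsFiring M x y := by
  cases h with
  | trans j t _ ht => exact ⟨j, t, ht, rfl⟩
  | reset j _ hr => exact absurd (congrFun hc j) (IsReset.clock_ne ⟨hr, rfl⟩)
  | time => exact absurd (congrFun hc 0) (Nat.succ_ne_self _).symm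

theorem IsFiring.step (h : IsFiring M x y) : Step M x y := by
  obtain ⟨j, t, ht, rfl⟩ := h
  exact .trans j t x ht

theorem IsFiring.not_isReset (h : IsFiring M x y) : ¬ IsReset M i x y := by
  obtain ⟨j, t, -, rfl⟩ := h
  exact fun hr => hr.clock_ne rfl

theorem not_transGen_isFiring (hdag : AgentsAcyclic M) (s : MState n Val Loc) :
    ¬ TransGen (IsFiring M) s s := by
  intro h
  obtain ⟨c, ⟨j, t, ht, rfl⟩, hcs⟩ := TransGen.head'_iff.mp h
  obtain ⟨p, hp, -⟩ := exists_agentPath_of_reflTransGen (i := j)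
    (fun _ _ hxy => ⟨hxy.step, hxy.not_isReset⟩) hcs
  exact hdag j (s.loc j) (t :: p) (List.cons_ne_nil _ _)
    ⟨ht.1, ht.2.1.symm, by simpa [fireTrans] using hp⟩

theorem not_transGen_of_not_isReset (hdag : AgentsAcyclic M) (i : Fin n) (s : MState n Val Loc) :
    ¬ TransGen (fun x y => Step M x y ∧ ¬ IsReset M i x y) s s := by
  intro h
  have : NeZero n := NeZero.of_pos i.pos
  have h1 := h.restrict_eq_of_monotone (f := fun x => x.clock i) fun _ _ hxy => hxy.1.clock_le hxy.2
  have h2 := h1.restrict_eq_of_monotone (f := fun x => OrderDual.toDual x.clock)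
    fun _ _ hxy => hxy.1.1.clock_antitone hxy.2
  exact not_transGen_isFiring hdag s
    (TransGen.mono (fun _ _ hxy => hxy.1.1.1.isFiring_of_clock_eq hxy.2) _ _ h2)

theorem Step.snd_v_le {W X : Type} [Preorder X] {M : GMAPT n (W × X) Loc}
    {x y : MState n (W × X) Loc} (hmono : ∀ i, ∀ t ∈ M.trans i, ∀ v : W × X, v.2 ≤ (t.f v).2)
    (h : Step M x y) : x.v.2 ≤ y.v.2 := by
  cases h with
  | trans j t _ ht => exact hmono j t ht.1 _
  | reset | time => exact le_rfl

end GMAPT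

/-- a G-MAPT satisfying the acyclicity constraint has an acyclic state
  space: no nonempty sequence of steps returns to a previously visited state. -/
theorem stmt3 {W X : Type} [LinearOrder X] (M : GMAPT n (W × X) Loc)
    (hdag : AgentsAcyclic M) (hgrow : XGrowth M) :
    ∀ s, Reachable M s → ¬ Relation.TransGen (Step M) s s := by
  rintro s - hcyc
  obtain ⟨⟨i, hi⟩, hmono⟩ := hgrow
  rcases (hcyc.restrict_eq_of_monotone fun _ _ h => h.snd_v_le hmono).avoid_or_exists_between
    (P := IsReset M i) with hfree | ⟨x, x', y, y', hx, hx'y, hy⟩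
  · exact not_transGen_of_not_isReset hdag i s
      (TransGen.mono (fun _ _ h => ⟨h.1.1, h.2⟩) _ _ hfree)
  · obtain ⟨p, hp, hpX⟩ := exists_agentPath_of_reflTransGen (fun _ _ h => ⟨h.1.1, h.2⟩) hx'y
    rw [hx.loc_eq, hy.1.1] at hp
    obtain ⟨t, ht, hlt⟩ := hi p hp
    obtain ⟨z, hz, -⟩ := hpX t ht
    exact (hlt z.v).ne hz.2
end

section
/- In a G-MAPT satisfying the strong-liveness constraint (Constraint 1), the following invariant holds for every reachable state (l⃗, c⃗, v): for each agent A_i, if l_i = l_i^{m_i} then c_i ≤ E_i, and if l_i ≠ l_i^{m_i} then c_i ≤ max{b : (l_i, f, [a,b], l') ∈ post(l_i)}. -/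
variable {n : ℕ} {Val Loc : Type}


/-- Constraint 1 (strong liveness). -/
def StrongLiveness (M : GMAPT n Val Loc) : Prop :=
  (∀ i, M.initState.loc i = M.finalLoc i → M.initState.clock i ≤ M.period i) ∧
  (∀ i, M.initState.loc i ≠ M.finalLoc i →
    ∃ t ∈ M.trans i, t.src = M.initState.loc i ∧ M.initState.clock i ≤ t.hi) ∧
  (∀ i, ∀ tin ∈ M.trans i, tin.dst ≠ M.initLoc i → tin.dst ≠ M.finalLoc i →
    ∀ tout ∈ M.trans i, tout.src = tin.dst → tin.hi ≤ tout.hi) ∧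
  (∀ i, ∀ tin ∈ M.trans i, tin.dst = M.finalLoc i → tin.hi ≤ M.period i)

/-- Structural conditions: each agent's transitions form a DAG between a unique initial
  locality (no incoming transition) and a unique final one (no outgoing transition),
  every non-final locality having an outgoing transition. -/
def WellFormed (M : GMAPT n Val Loc) : Prop :=
  (∀ i, ∀ t ∈ M.trans i, t.src ≠ M.finalLoc i) ∧
  (∀ i, ∀ t ∈ M.trans i, t.dst ≠ M.initLoc i) ∧
  (∀ i, ∀ t ∈ M.trans i, t.dst ≠ M.finalLoc i → ∃ t' ∈ M.trans i, t'.src = t.dst) ∧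
  (∀ i, M.initLoc i ≠ M.finalLoc i → ∃ t ∈ M.trans i, t.src = M.initLoc i)


/-- in a strongly live G-MAPT, in every reachable state the clock of an
  agent at its final locality is at most its period, and the clock of an agent at a
  non-final locality is at most the max upper bound of its outgoing transitions. -/
theorem stmt4 (M : GMAPT n Val Loc) (hsl : StrongLiveness M) (hwf : WellFormed M) :
    ∀ s, Reachable M s → ∀ i,
      (s.loc i = M.finalLoc i → s.clock i ≤ M.period i) ∧
      (s.loc i ≠ M.finalLoc i →
        ∃ t ∈ M.trans i, t.src = s.loc i ∧ s.clock i ≤ t.hi) := by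
  obtain ⟨sl1, sl2, sl3, sl4⟩ := hsl
  obtain ⟨wf1, wf2, wf3, wf4⟩ := hwf
  intro s hs
  induction hs with
  | refl =>
    intro i
    constructor
    · exact sl1 i
    · intro h
      obtain ⟨t, ht, hsrc, hhi⟩ := sl2 i h
      exact ⟨t, ht, hsrc, hhi⟩
  | tail hreach hstep ih =>
    rename_i s s'
    intro i
    cases hstep with
    | trans j t _ hen =>
      obtain ⟨htm, hsrc, _, hhi⟩ := hen
      by_cases hij : i = j
      · subst hij
        simp only [fireTrans, Function.update_self]
        constructor
        · intro hfin
          exact le_trans hhi (sl4 i t htm hfin)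
        · intro hnfin
          obtain ⟨t', ht', hsrc'⟩ := wf3 i t htm hnfin
          exact ⟨t', ht', hsrc', le_trans hhi (sl3 i t htm (wf2 i t htm) hnfin t' ht' hsrc')⟩
      · simpa [fireTrans, Function.update_of_ne hij] using ih i
    | reset j _ hen =>
      by_cases hij : i = j
      · subst hij
        simp only [fireReset, Function.update_self]
        constructor
        · intro _; exact Nat.zero_le _
        · intro hnfin
          obtain ⟨t', ht', hsrc'⟩ := wf4 i hnfin
          exact ⟨t', ht', hsrc', Nat.zero_le _⟩
      · simpa [fireReset, Function.update_of_ne hij] using ih i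
    | time _ hen =>
      rcases hen i with ⟨t, ht, hsrc, hlt⟩ | ⟨hfin, hlt⟩
      · constructor
        · intro hfin
          exact absurd (hsrc ▸ hfin : t.src = M.finalLoc i) (wf1 i t ht)
        · intro _
          exact ⟨t, ht, hsrc.symm, hlt⟩
      · constructor
        · intro _; exact hlt
        · intro hne; exact absurd hfin hne
end

section
/- In the state space of a MAPT (a DAG), two coherent cuts cannot cross: if C1 and C2 are coherent cuts, s1, s1' ∈ C1, s2, s2' ∈ C2, and there is an evolution ω from s1 to s2 and an evolution ω' from s2' to s1', then C1 = C2 and both ω and ω' are empty. In particular, two distinct coherent cuts are disjoint. -/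
/-- Labels for state changes: transition firing, reset, or unit time increase. -/
inductive Ev (n : ℕ) (Val Loc : Type) where
  | tr (i : Fin n) (t : ATrans Val Loc)
  | rst (i : Fin n)
  | tick


variable {n : ℕ} {Val Loc : Type}


/-- A MAPT is a G-MAPT satisfying the strong-liveness and acyclicity constraints. -/
def IsMAPT {W X : Type} [LinearOrder X] (M : GMAPT n (W × X) Loc) : Prop :=
  StrongLiveness M ∧ WellFormed M ∧ AgentsAcyclic M ∧ XGrowth M


/-- One labelled step of the original semantics. -/
def EStep (M : GMAPT n Val Loc) :
    Ev n Val Loc → MState n Val Loc → MState n Val Loc → Prop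
  | .tr i t, s, s' => TransEnabled M i t s ∧ s' = fireTrans i t s
  | .rst i, s, s' => ResetEnabled M i s ∧ s' = fireReset M i s
  | .tick, s, s' => TimeEnabled M s ∧ s' = tickState s

/-- An evolution: a labelled path of the original semantics. -/
def Evolution (M : GMAPT n Val Loc) :
    List (Ev n Val Loc) → MState n Val Loc → MState n Val Loc → Prop
  | [], s, s' => s = s'
  | e :: w, s, s' => ∃ s₁, EStep M e s s₁ ∧ Evolution M w s₁ s'

def isTick : Ev n Val Loc → Bool
  | .tick => true
  | _ => false

/-- Δ(ω): total elapsed time of an evolution. -/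
def timeLen (w : List (Ev n Val Loc)) : ℕ := (w.filter isTick).length

/-- word(ω): the untimed projection of an evolution onto transitions and resets. -/
def wordOf (w : List (Ev n Val Loc)) : List (Ev n Val Loc) :=
  w.filter (fun e => ! isTick e)

/-- The number of resets of agent `i` in an evolution. -/
def resetCount (i : Fin n) (w : List (Ev n Val Loc)) : ℕ :=
  (w.filter (fun e => match e with | .rst j => decide (j = i) | _ => false)).length


/-- There is an evolution of `M` from `a` to `s`. -/
def EvReach (M : GMAPT n Val Loc) (a s : MState n Val Loc) : Prop :=
  ∃ w, Evolution M w a s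

/-- Strict order of the state DAG: a nonempty evolution from `s` to `s'`. -/
def StrictBelow (M : GMAPT n Val Loc) (s s' : MState n Val Loc) : Prop :=
  ∃ w, w ≠ [] ∧ Evolution M w s s'

/-- A coherent cut of the sub-DAG of states reachable from `a`: a maximal antichain all
  of whose states share locality and clock vectors and lie at equal time distance
  from `a`. -/
def IsCoherentCutFrom (M : GMAPT n Val Loc) (a : MState n Val Loc)
    (C : Set (MState n Val Loc)) : Prop :=
  (∀ s ∈ C, EvReach M a s) ∧
  (∀ s ∈ C, ∀ s' ∈ C, ¬ StrictBelow M s s') ∧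
  (∀ s, EvReach M a s → s ∉ C → ∃ s' ∈ C, StrictBelow M s s' ∨ StrictBelow M s' s) ∧
  (∀ s ∈ C, ∀ s' ∈ C, s.loc = s'.loc ∧ s.clock = s'.clock) ∧
  (∀ s ∈ C, ∀ s' ∈ C, ∀ w w', Evolution M w a s → Evolution M w' a s' →
    timeLen w = timeLen w')

/-- A coherent cut of the state space of `M`. -/
def IsCoherentCut (M : GMAPT n Val Loc) (C : Set (MState n Val Loc)) : Prop :=
  IsCoherentCutFrom M M.initState C


def transitionsOf (i : Fin n) (w : List (Ev n Val Loc)) : List (ATrans Val Loc) :=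
  w.filterMap fun
    | .tr j t => if j = i then some t else none
    | _ => none

theorem mem_transitionsOf {i : Fin n} {t : ATrans Val Loc} {w : List (Ev n Val Loc)} :
    t ∈ transitionsOf i w ↔ Ev.tr i t ∈ w := by
  simp only [transitionsOf, List.mem_filterMap]
  constructor
  · rintro ⟨(⟨j, t'⟩ | _ | _), he, hte⟩ <;> simp only [reduceCtorEq] at hte
    split_ifs at hte with hji
    cases hji; cases hte; exact he
  · exact fun h => ⟨_, h, by simp⟩

theorem eq_nil_of_transitionsOf_eq_nil {w : List (Ev n Val Loc)} (htick : Ev.tick ∉ w)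
    (hrst : ∀ i, Ev.rst i ∉ w) (htrans : ∀ i, transitionsOf i w = []) : w = [] :=
  List.eq_nil_iff_forall_not_mem.2 fun
    | .tr i t, hmem => by simpa [htrans i] using mem_transitionsOf.2 hmem
    | .rst i, hmem => hrst i hmem
    | .tick, hmem => htick hmem

theorem timeLen_append (w w' : List (Ev n Val Loc)) :
    timeLen (w ++ w') = timeLen w + timeLen w' := by
  simp [timeLen, List.filter_append]

theorem timeLen_eq_zero_iff {w : List (Ev n Val Loc)} : timeLen w = 0 ↔ Ev.tick ∉ w := by
  simp only [timeLen, List.length_eq_zero_iff, List.filter_eq_nil_iff]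
  constructor
  · exact fun h hmem => by simpa [isTick] using h _ hmem
  · rintro h (_ | _ | _) hmem <;> simp_all [isTick]

theorem AgentPath.append {M : GMAPT n Val Loc} {i : Fin n} {p q : List (ATrans Val Loc)}
    {l l' l'' : Loc} (hp : AgentPath M i p l l') (hq : AgentPath M i q l' l'') :
    AgentPath M i (p ++ q) l l'' := by
  induction p generalizing l with
  | nil => exact (hp : l = l') ▸ hq
  | cons t p ih => exact ⟨hp.1, hp.2.1, ih hp.2.2⟩

theorem EStep.clock_le {M : GMAPT n Val Loc} {e : Ev n Val Loc} {s s' : MState n Val Loc}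
    (he : EStep M e s s') (htick : e ≠ .tick) (i : Fin n) : s'.clock i ≤ s.clock i := by
  cases e with
  | tr j t => obtain ⟨-, rfl⟩ := he; exact le_rfl
  | rst j =>
    obtain ⟨-, rfl⟩ := he
    simp only [fireReset, Function.update_apply]
    split_ifs <;> omega
  | tick => exact absurd rfl htick

namespace Evolution

variable {M : GMAPT n Val Loc}

theorem append {w w' : List (Ev n Val Loc)} {s s' s'' : MState n Val Loc}
    (h : Evolution M w s s') (h' : Evolution M w' s' s'') : Evolution M (w ++ w') s s'' := by
  induction w generalizing s with
  | nil => exact (h : s = s') ▸ h'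
  | cons e w ih =>
    obtain ⟨s₁, he, hw⟩ := h
    exact ⟨s₁, he, ih hw⟩

theorem clock_le {w : List (Ev n Val Loc)} {s s' : MState n Val Loc} (h : Evolution M w s s')
    (htick : Ev.tick ∉ w) (i : Fin n) : s'.clock i ≤ s.clock i := by
  induction w generalizing s with
  | nil => exact (h : s = s') ▸ le_rfl
  | cons e w ih =>
    obtain ⟨s₁, he, hw⟩ := h
    rw [List.mem_cons, not_or] at htick
    exact (ih hw htick.2).trans (he.clock_le (Ne.symm htick.1) i)

/-- A reset sets a clock from its period, which is positive, back to `0`. -/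
theorem clock_lt_of_rst_mem {w : List (Ev n Val Loc)} {s s' : MState n Val Loc}
    (h : Evolution M w s s') (htick : Ev.tick ∉ w) {i : Fin n} (hrst : Ev.rst i ∈ w) :
    s'.clock i < s.clock i := by
  induction w generalizing s with
  | nil => simp at hrst
  | cons e w ih =>
    obtain ⟨s₁, he, hw⟩ := h
    rw [List.mem_cons, not_or] at htick
    by_cases hei : e = .rst i
    · subst hei
      obtain ⟨⟨-, hper⟩, rfl⟩ := he
      have := hw.clock_le htick.2 i
      simp only [fireReset, Function.update_self] at this
      have := M.period_pos i
      omega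
    · have hrst' : Ev.rst i ∈ w := (List.mem_cons.1 hrst).resolve_left (Ne.symm hei)
      exact (ih hw htick.2 hrst').trans_le (he.clock_le (Ne.symm htick.1) i)

theorem agentPath_transitionsOf {w : List (Ev n Val Loc)} {s s' : MState n Val Loc}
    (h : Evolution M w s s') {i : Fin n} (hrst : Ev.rst i ∉ w) :
    AgentPath M i (transitionsOf i w) (s.loc i) (s'.loc i) := by
  induction w generalizing s with
  | nil => exact congrArg (·.loc i) (h : s = s')
  | cons e w ih =>
    obtain ⟨s₁, he, hw⟩ := h
    rw [List.mem_cons, not_or] at hrst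
    have ih := ih hw hrst.2
    cases e with
    | tr j t =>
      obtain ⟨⟨hmem, hsrc, -⟩, rfl⟩ := he
      by_cases hji : j = i
      · subst hji
        simp only [fireTrans, Function.update_self] at ih
        simpa [transitionsOf, AgentPath, hmem, hsrc] using ih
      · simpa [transitionsOf, fireTrans, hji, Function.update_of_ne (Ne.symm hji)] using ih
    | rst j =>
      obtain ⟨-, rfl⟩ := he
      have hji : j ≠ i := fun hji => hrst.1 (hji ▸ rfl)
      simpa [transitionsOf, fireReset, Function.update_of_ne (Ne.symm hji)] using ih
    | tick =>
      obtain ⟨-, rfl⟩ := he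
      exact ih

/-- Clocks never increase without time passing and resets strictly decrease them, so the two
evolutions contain no reset; each agent's transitions then close a cycle in its acyclic
locality graph. -/
theorem eq_nil_of_untimed_roundTrip (hA : AgentsAcyclic M) {w w' : List (Ev n Val Loc)}
    {s₁ s₂ s₂' s₁' : MState n Val Loc} (hw : Evolution M w s₁ s₂) (hw' : Evolution M w' s₂' s₁')
    (htick : Ev.tick ∉ w) (htick' : Ev.tick ∉ w')
    (h₂ : s₂.loc = s₂'.loc ∧ s₂.clock = s₂'.clock)
    (h₁ : s₁'.loc = s₁.loc ∧ s₁'.clock = s₁.clock) : w = [] ∧ w' = [] := by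
  have hclock : ∀ i, s₂.clock i = s₁.clock i := fun i => by
    have := hw.clock_le htick i
    have := hw'.clock_le htick' i
    simp only [h₁.2, ← h₂.2] at this
    omega
  have hrst : ∀ i, Ev.rst i ∉ w := fun i hmem =>
    (hw.clock_lt_of_rst_mem htick hmem).ne (hclock i)
  have hrst' : ∀ i, Ev.rst i ∉ w' := fun i hmem => by
    have := hw'.clock_lt_of_rst_mem htick' hmem
    simp only [h₁.2, ← h₂.2, hclock] at this
    exact this.false
  have htrans : ∀ i, transitionsOf i w ++ transitionsOf i w' = [] := fun i => by
    by_contra hne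
    have hcycle := (hw.agentPath_transitionsOf (hrst i)).append
      (h₂.1 ▸ h₁.1 ▸ hw'.agentPath_transitionsOf (hrst' i))
    exact hA i _ _ hne hcycle
  exact ⟨eq_nil_of_transitionsOf_eq_nil htick hrst fun i =>
      (List.append_eq_nil_iff.1 (htrans i)).1,
    eq_nil_of_transitionsOf_eq_nil htick' hrst' fun i =>
      (List.append_eq_nil_iff.1 (htrans i)).2⟩

end Evolution

namespace IsCoherentCutFrom

variable {M : GMAPT n Val Loc} {a : MState n Val Loc} {C₁ C₂ : Set (MState n Val Loc)}

/-- With evolutions `u₁ : a → s₁` and `u₂ : a → s₂'`, coherence of `C₂` and of `C₁` gives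
`Δ(u₁) + Δ(w) = Δ(u₂)` and `Δ(u₂) + Δ(w') = Δ(u₁)`. -/
theorem timeLen_eq_zero_of_cross (h₁ : IsCoherentCutFrom M a C₁) (h₂ : IsCoherentCutFrom M a C₂)
    {s₁ s₁' s₂ s₂' : MState n Val Loc} (hs₁ : s₁ ∈ C₁) (hs₁' : s₁' ∈ C₁) (hs₂ : s₂ ∈ C₂)
    (hs₂' : s₂' ∈ C₂) {w w' : List (Ev n Val Loc)} (hw : Evolution M w s₁ s₂)
    (hw' : Evolution M w' s₂' s₁') : timeLen w = 0 ∧ timeLen w' = 0 := by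
  obtain ⟨u₁, hu₁⟩ := h₁.1 s₁ hs₁
  obtain ⟨u₂, hu₂⟩ := h₂.1 s₂' hs₂'
  have e₂ := h₂.2.2.2.2 s₂ hs₂ s₂' hs₂' _ _ (hu₁.append hw) hu₂
  have e₁ := h₁.2.2.2.2 s₁ hs₁ s₁' hs₁' _ _ hu₁ (hu₂.append hw')
  rw [timeLen_append] at e₁ e₂
  omega

theorem eq_nil_of_cross (hA : AgentsAcyclic M) (h₁ : IsCoherentCutFrom M a C₁)
    (h₂ : IsCoherentCutFrom M a C₂) {s₁ s₁' s₂ s₂' : MState n Val Loc} (hs₁ : s₁ ∈ C₁)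
    (hs₁' : s₁' ∈ C₁) (hs₂ : s₂ ∈ C₂) (hs₂' : s₂' ∈ C₂) {w w' : List (Ev n Val Loc)}
    (hw : Evolution M w s₁ s₂) (hw' : Evolution M w' s₂' s₁') : w = [] ∧ w' = [] := by
  obtain ⟨hΔ, hΔ'⟩ := timeLen_eq_zero_of_cross h₁ h₂ hs₁ hs₁' hs₂ hs₂' hw hw'
  exact hw.eq_nil_of_untimed_roundTrip hA hw' (timeLen_eq_zero_iff.1 hΔ)
    (timeLen_eq_zero_iff.1 hΔ') (h₂.2.2.2.1 s₂ hs₂ s₂' hs₂') (h₁.2.2.2.1 s₁' hs₁' s₁ hs₁)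

/-- A state of `C₁ \ C₂` would be strictly comparable with some state of `C₂`, and together
with the trivial evolution at a common state `x` this is a crossing with a nonempty leg. -/
theorem subset_of_mem_inter (hA : AgentsAcyclic M) (h₁ : IsCoherentCutFrom M a C₁)
    (h₂ : IsCoherentCutFrom M a C₂) {x : MState n Val Loc} (hx₁ : x ∈ C₁) (hx₂ : x ∈ C₂) :
    C₁ ⊆ C₂ := by
  intro s hs
  by_contra hns
  obtain ⟨u, hu, ⟨v, hv, hev⟩ | ⟨v, hv, hev⟩⟩ := h₂.2.2.1 s (h₁.1 s hs) hns
  · exact hv (eq_nil_of_cross hA h₁ h₂ hs hx₁ hu hx₂ hev (w' := []) rfl).1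
  · exact hv (eq_nil_of_cross hA h₂ h₁ hu hx₂ hs hx₁ hev (w' := []) rfl).1

theorem eq_of_mem_inter (hA : AgentsAcyclic M) (h₁ : IsCoherentCutFrom M a C₁)
    (h₂ : IsCoherentCutFrom M a C₂) {x : MState n Val Loc} (hx₁ : x ∈ C₁) (hx₂ : x ∈ C₂) :
    C₁ = C₂ :=
  (subset_of_mem_inter hA h₁ h₂ hx₁ hx₂).antisymm (subset_of_mem_inter hA h₂ h₁ hx₂ hx₁)

end IsCoherentCutFrom

/-- coherent cuts do not cross, and distinct coherent cuts are disjoint. -/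
theorem stmt7 {W X : Type} [LinearOrder X] (M : GMAPT n (W × X) Loc)
    (hM : IsMAPT M) :
    (∀ C1 C2 : Set (MState n (W × X) Loc),
      IsCoherentCut M C1 → IsCoherentCut M C2 →
      ∀ s1 ∈ C1, ∀ s1' ∈ C1, ∀ s2 ∈ C2, ∀ s2' ∈ C2,
      ∀ w w', Evolution M w s1 s2 → Evolution M w' s2' s1' →
        C1 = C2 ∧ w = [] ∧ w' = []) ∧
    (∀ C1 C2 : Set (MState n (W × X) Loc),
      IsCoherentCut M C1 → IsCoherentCut M C2 → C1 ≠ C2 → Disjoint C1 C2) := by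
  have hA : AgentsAcyclic M := hM.2.2.1
  refine ⟨fun C1 C2 h1 h2 s1 hs1 s1' hs1' s2 hs2 s2' hs2' w w' hw hw' => ?_,
    fun C1 C2 h1 h2 hne => Set.disjoint_left.2 fun s hs1 hs2 =>
      hne (h1.eq_of_mem_inter hA h2 hs1 hs2)⟩
  obtain ⟨rfl, rfl⟩ := h1.eq_nil_of_cross hA h2 hs1 hs1' hs2 hs2' hw hw'
  have hs12 : s1 = s2 := hw
  exact ⟨h1.eq_of_mem_inter hA h2 hs1 (hs12 ▸ hs2), rfl, rfl⟩
end

section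
/- In a MAPT, along any evolution ω from the initial state, the clock value of agent A_i in the resulting state is determined by c_i = init_i + Δ(ω) − E_i · (#r_i(ω)), where Δ(ω) is the total elapsed time of ω and #r_i(ω) is the number of resets of A_i occurring in ω; in particular, the clock vector depends only on the untimed projection word(ω) and on Δ(ω), not on when the time passings occurred. -/
variable {n : ℕ} {Val Loc : Type}


lemma clock_formula (M : GMAPT n Val Loc) :
    ∀ (w : List (Ev n Val Loc)) (s0 s : MState n Val Loc),
      Evolution M w s0 s → ∀ i,
      (s.clock i : ℤ) = (s0.clock i : ℤ) + (timeLen w : ℤ)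
        - (M.period i : ℤ) * (resetCount i w : ℤ) := by
  intro w
  induction w with
  | nil =>
    intro s0 s h i
    cases h
    simp [timeLen, resetCount]
  | cons e w ih =>
    intro s0 s h i
    obtain ⟨s1, he, hw⟩ := h
    have hrec := ih s1 s hw i
    cases e with
    | tr j t =>
      obtain ⟨_, rfl⟩ := he
      have ht : timeLen (Ev.tr j t :: w) = timeLen w := by
        simp [timeLen, isTick, List.filter_cons]
      have hr : resetCount i (Ev.tr j t :: w) = resetCount i w := by
        simp [resetCount, List.filter_cons]
      rw [ht, hr]
      simpa [fireTrans] using hrec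
    | rst j =>
      obtain ⟨hen, rfl⟩ := he
      have ht : timeLen (Ev.rst j :: w) = timeLen w := by
        simp [timeLen, isTick, List.filter_cons]
      rw [ht]
      by_cases hji : j = i
      · subst hji
        have hclk : s0.clock j = M.period j := hen.2
        have hr : resetCount j (Ev.rst j :: w) = resetCount j w + 1 := by
          simp [resetCount, List.filter_cons]
        rw [hr]
        rw [show (fireReset M j s0).clock j = 0 from Function.update_self _ _ _] at hrec
        push_cast at hrec ⊢
        rw [hclk]
        linarith
      · have hr : resetCount i (Ev.rst j :: w) = resetCount i w := by
          simp [resetCount, List.filter_cons, hji]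
        rw [hr]
        rw [show (fireReset M j s0).clock i = s0.clock i from
          Function.update_of_ne (Ne.symm hji) _ _] at hrec
        exact hrec
    | tick =>
      obtain ⟨_, rfl⟩ := he
      have ht : timeLen (Ev.tick :: w) = timeLen w + 1 := by
        simp [timeLen, isTick, List.filter_cons]
      have hr : resetCount i (Ev.tick :: w) = resetCount i w := by
        simp [resetCount, List.filter_cons]
      rw [ht, hr]
      simp only [tickState] at hrec
      push_cast at hrec ⊢
      omega

lemma resetCount_wordOf (i : Fin n) (w : List (Ev n Val Loc)) :
    resetCount i w = resetCount i (wordOf w) := by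
  induction w with
  | nil => rfl
  | cons e w ih =>
    cases e with
    | tr j t =>
      simp only [resetCount, wordOf, isTick, List.filter_cons] at ih ⊢
      simpa using ih
    | rst j =>
      simp only [resetCount, wordOf, isTick, List.filter_cons] at ih ⊢
      by_cases hji : j = i <;> simp [hji] at ih ⊢ <;> omega
    | tick =>
      simp only [resetCount, wordOf, isTick, List.filter_cons] at ih ⊢
      simpa using ih

/-- along any evolution ω from the initial state,
  c_i = init_i + Δ(ω) − E_i·#r_i(ω); in particular the clock vector depends only on
  word(ω) and Δ(ω). -/
theorem stmt11 {W X : Type} [LinearOrder X] (M : GMAPT n (W × X) Loc)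
    (hM : IsMAPT M) :
    (∀ w s, Evolution M w M.initState s → ∀ i,
      (s.clock i : ℤ) =
        (M.initState.clock i : ℤ) + (timeLen w : ℤ)
          - (M.period i : ℤ) * (resetCount i w : ℤ)) ∧
    (∀ w w' s s', Evolution M w M.initState s → Evolution M w' M.initState s' →
      wordOf w = wordOf w' → timeLen w = timeLen w' → s.clock = s'.clock) := by
  constructor
  · intro w s h i
    exact clock_formula M w _ s h i
  · intro w w' s s' h h' hword htime
    funext i
    have h1 := clock_formula M w _ s h i
    have h2 := clock_formula M w' _ s' h' i
    have hr : resetCount i w = resetCount i w' := by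
      rw [resetCount_wordOf i w, hword, ← resetCount_wordOf]
    have : (s.clock i : ℤ) = (s'.clock i : ℤ) := by
      rw [h1, h2, htime, hr]
    exact_mod_cast this
end

section
/- Every evolution in the accelerated semantics of a MAPT is also an evolution in the original semantics: replacing each accelerated time jump of δ time units (with δ ≤ B, the maximal allowed delay) by δ consecutive unit time increases yields a valid evolution of the original semantics leading to the same state. -/
/-- Labels for the accelerated semantics: transition, reset, or time jump of δ units. -/
inductive AEv (n : ℕ) (Val Loc : Type) where
  | tr (i : Fin n) (t : ATrans Val Loc)
  | rst (i : Fin n)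
  | jump (d : ℕ)


variable {n : ℕ} {Val Loc : Type}


/-- Add δ time units to every clock. -/
def addTime (d : ℕ) (s : MState n Val Loc) : MState n Val Loc :=
  { loc := s.loc, clock := fun i => s.clock i + d, v := s.v }

/-- δ ≤ B: the delay δ does not overtake any relevant upper bound
  (B_i = E_i − c_i at the final locality, max{b − c_i} over outgoing transitions else). -/
def DelayOK (M : GMAPT n Val Loc) (s : MState n Val Loc) (d : ℕ) : Prop :=
  ∀ i, (s.loc i = M.finalLoc i → s.clock i + d ≤ M.period i) ∧
    (s.loc i ≠ M.finalLoc i → ∃ t ∈ M.trans i, t.src = s.loc i ∧ s.clock i + d ≤ t.hi)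

/-- The set of transitions and resets enabled at a state. -/
def EnSet (M : GMAPT n Val Loc) (s : MState n Val Loc) :
    Set ((Fin n × ATrans Val Loc) ⊕ Fin n) :=
  {x | match x with
    | Sum.inl (i, t) => TransEnabled M i t s
    | Sum.inr i => ResetEnabled M i s}

/-- `d` reaches the end of its action zone. -/
def ZoneEnd (M : GMAPT n Val Loc) (s : MState n Val Loc) (d : ℕ) : Prop :=
  DelayOK M s d ∧ ∀ d', d < d' → DelayOK M s d' →
    EnSet M (addTime d' s) ≠ EnSet M (addTime d s)

/-- The action zone at delay `d` is maximal (not dominated by any other zone). -/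
def MaximalZone (M : GMAPT n Val Loc) (s : MState n Val Loc) (d : ℕ) : Prop :=
  ∀ d', DelayOK M s d' → ¬ (EnSet M (addTime d s) ⊂ EnSet M (addTime d' s))

/-- An accelerated time jump: to the end of the next maximal action zone. -/
def AccJump (M : GMAPT n Val Loc) (s : MState n Val Loc) (d : ℕ) : Prop :=
  0 < d ∧ ZoneEnd M s d ∧ MaximalZone M s d ∧
    ∀ d', 0 < d' → d' < d → ¬ (ZoneEnd M s d' ∧ MaximalZone M s d')

/-- One labelled step of the accelerated semantics. -/
def AStep (M : GMAPT n Val Loc) :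
    AEv n Val Loc → MState n Val Loc → MState n Val Loc → Prop
  | .tr i t, s, s' => TransEnabled M i t s ∧ s' = fireTrans i t s
  | .rst i, s, s' => ResetEnabled M i s ∧ s' = fireReset M i s
  | .jump d, s, s' => AccJump M s d ∧ s' = addTime d s

/-- An evolution of the accelerated semantics. -/
def AEvolution (M : GMAPT n Val Loc) :
    List (AEv n Val Loc) → MState n Val Loc → MState n Val Loc → Prop
  | [], s, s' => s = s'
  | e :: w, s, s' => ∃ s₁, AStep M e s s₁ ∧ AEvolution M w s₁ s'

/-- Replace an accelerated event by the corresponding original events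
  (a jump of δ becomes δ unit time increases). -/
def expandEv : AEv n Val Loc → List (Ev n Val Loc)
  | .tr i t => [.tr i t]
  | .rst i => [.rst i]
  | .jump d => List.replicate d .tick

def expandAll : List (AEv n Val Loc) → List (Ev n Val Loc)
  | [] => []
  | e :: w => expandEv e ++ expandAll w

/-- The untimed projection of an accelerated evolution. -/
def awordOf : List (AEv n Val Loc) → List (Ev n Val Loc) :=
  List.filterMap (fun e => match e with
    | .tr i t => some (.tr i t)
    | .rst i => some (.rst i)
    | .jump _ => none)

/-- Total elapsed time of an accelerated evolution. -/
def atimeLen : List (AEv n Val Loc) → ℕ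
  | [] => 0
  | (AEv.jump d) :: w => d + atimeLen w
  | (AEv.tr _ _) :: w => atimeLen w
  | (AEv.rst _) :: w => atimeLen w


lemma evolution_append (M : GMAPT n Val Loc) :
    ∀ w1 w2 (s s1 s2 : MState n Val Loc), Evolution M w1 s s1 → Evolution M w2 s1 s2 →
      Evolution M (w1 ++ w2) s s2 := by
  intro w1
  induction w1 with
  | nil => intro w2 s s1 s2 h1 h2; cases h1; exact h2
  | cons e w ih =>
    rintro w2 s s1 s2 ⟨sm, hst, hev⟩ h2
    exact ⟨sm, hst, ih _ _ _ _ hev h2⟩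

lemma delay_ticks (M : GMAPT n Val Loc) :
    ∀ d (s : MState n Val Loc), DelayOK M s d →
      Evolution M (List.replicate d Ev.tick) s (addTime d s) := by
  intro d
  induction d with
  | zero =>
    intro s _
    show s = addTime 0 s
    cases s with
    | mk l c v => simp [addTime]
  | succ d ih =>
    intro s hD
    have hTE : TimeEnabled M s := by
      intro i
      rcases hD i with ⟨h1, h2⟩
      by_cases hl : s.loc i = M.finalLoc i
      · right
        exact ⟨hl, lt_of_lt_of_le (by omega) (h1 hl)⟩
      · left
        obtain ⟨t, ht, hsrc, hhi⟩ := h2 hl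
        exact ⟨t, ht, hsrc.symm, lt_of_lt_of_le (by omega) hhi⟩
    have hD' : DelayOK M (tickState s) d := by
      intro i
      rcases hD i with ⟨h1, h2⟩
      constructor
      · intro hl
        have := h1 hl
        simp only [tickState] at *
        omega
      · intro hl
        obtain ⟨t, ht, hsrc, hhi⟩ := h2 hl
        exact ⟨t, ht, hsrc, by simp only [tickState] at *; omega⟩
    refine ⟨tickState s, ⟨hTE, rfl⟩, ?_⟩
    have := ih (tickState s) hD'
    have heq : addTime d (tickState s) = addTime (d + 1) s := by
      simp only [addTime, tickState]
      congr 1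
      funext i
      omega
    rwa [heq] at this

/-- every evolution of the accelerated semantics is also an evolution of
  the original semantics: replacing each time jump of δ units by δ unit time increases
  yields a valid original evolution leading to the same state. -/
theorem stmt13 {W X : Type} [LinearOrder X] (M : GMAPT n (W × X) Loc)
    (hM : IsMAPT M) :
    ∀ w s s', AEvolution M w s s' → Evolution M (expandAll w) s s' := by
  intro w
  induction w with
  | nil => intro s s' h; exact h
  | cons e w ih =>
    rintro s s' ⟨s₁, hstep, hev⟩
    have hrest := ih s₁ s' hev
    cases e with
    | tr i t => exact ⟨s₁, hstep, hrest⟩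
    | rst i => exact ⟨s₁, hstep, hrest⟩
    | jump d =>
      obtain ⟨⟨hpos, ⟨hDOK, _⟩, _, _⟩, hs₁⟩ := hstep
      have h1 : Evolution M (List.replicate d Ev.tick) s s₁ := by
        rw [hs₁]; exact delay_ticks M d s hDOK
      exact evolution_append M _ _ s s₁ s' h1 hrest
end

section
/- The original and accelerated semantics of a MAPT have the same abstracted dynamics: the set of untimed projections (onto transitions and resets) of evolutions from the initial state is the same in both semantics. -/
variable {n : ℕ} {Val Loc : Type}


namespace S14

open scoped Classical

variable {n : ℕ} {Val Loc : Type}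

/-! ### Basic lemmas about `addTime` -/

theorem addTime_zero (s : MState n Val Loc) : addTime 0 s = s := by
  simp [addTime]

theorem addTime_addTime (a b : ℕ) (s : MState n Val Loc) :
    addTime a (addTime b s) = addTime (b + a) s := by
  simp [addTime, Nat.add_assoc]

@[simp] theorem addTime_loc (a : ℕ) (s : MState n Val Loc) :
    (addTime a s).loc = s.loc := rfl

@[simp] theorem addTime_clock (a : ℕ) (s : MState n Val Loc) (i : Fin n) :
    (addTime a s).clock i = s.clock i + a := rfl

theorem mem_enset_inl {M : GMAPT n Val Loc} {s : MState n Val Loc}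
    {i : Fin n} {t : ATrans Val Loc} :
    (Sum.inl (i, t) ∈ EnSet M s) ↔ TransEnabled M i t s := Iff.rfl

theorem mem_enset_inr {M : GMAPT n Val Loc} {s : MState n Val Loc} {i : Fin n} :
    (Sum.inr i ∈ EnSet M s) ↔ ResetEnabled M i s := Iff.rfl

theorem transEnabled_addTime {M : GMAPT n Val Loc} {s : MState n Val Loc}
    {i : Fin n} {t : ATrans Val Loc} {d : ℕ} :
    TransEnabled M i t (addTime d s) ↔
      (t ∈ M.trans i ∧ s.loc i = t.src ∧ t.lo ≤ s.clock i + d ∧ s.clock i + d ≤ t.hi) :=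
  Iff.rfl

theorem resetEnabled_addTime {M : GMAPT n Val Loc} {s : MState n Val Loc}
    {i : Fin n} {d : ℕ} :
    ResetEnabled M i (addTime d s) ↔
      (s.loc i = M.finalLoc i ∧ s.clock i + d = M.period i) := Iff.rfl

theorem delayOK_mono {M : GMAPT n Val Loc} {s : MState n Val Loc} {d d' : ℕ}
    (h : DelayOK M s d) (hle : d' ≤ d) : DelayOK M s d' := by
  intro i
  refine ⟨fun hf => le_trans (by omega) ((h i).1 hf), fun hf => ?_⟩
  obtain ⟨t, ht, hsrc, hd⟩ := (h i).2 hf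
  exact ⟨t, ht, hsrc, by omega⟩

/-- membership of `x` in `EnSet` along time is an interval. -/
theorem enset_interval {M : GMAPT n Val Loc} {s : MState n Val Loc}
    {x : (Fin n × ATrans Val Loc) ⊕ Fin n} {d1 d2 e : ℕ} (h1 : d1 ≤ e) (h2 : e ≤ d2)
    (m1 : x ∈ EnSet M (addTime d1 s)) (m2 : x ∈ EnSet M (addTime d2 s)) :
    x ∈ EnSet M (addTime e s) := by
  rcases x with ⟨i, t⟩ | i
  · rw [mem_enset_inl, transEnabled_addTime] at m1 m2 ⊢
    obtain ⟨ht, hl, hlo, _⟩ := m1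
    obtain ⟨_, _, _, hhi⟩ := m2
    exact ⟨ht, hl, by omega, by omega⟩
  · rw [mem_enset_inr, resetEnabled_addTime] at m1 m2 ⊢
    obtain ⟨hl, hc⟩ := m1
    obtain ⟨_, hc2⟩ := m2
    exact ⟨hl, by omega⟩

/-! ### Existence of a maximal zone end below a given "dying" zone end -/

theorem exists_max_zone_end (M : GMAPT n Val Loc) (s' : MState n Val Loc)
    (x : (Fin n × ATrans Val Loc) ⊕ Fin n) (hx0 : x ∉ EnSet M s') :
    ∀ d, 0 < d → DelayOK M s' d → x ∈ EnSet M (addTime d s') →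
      (∃ y, y ∈ EnSet M (addTime d s') ∧ ∀ d'', d < d'' → y ∉ EnSet M (addTime d'' s')) →
      ∃ e, e ≤ d ∧ 0 < e ∧ ZoneEnd M s' e ∧ MaximalZone M s' e := by
  intro d
  induction d using Nat.strong_induction_on with
  | _ d IH =>
    rintro hd hD hxd ⟨y, hy, hdie⟩
    have hZE : ZoneEnd M s' d := by
      refine ⟨hD, fun d'' hlt hD'' heq => ?_⟩
      exact hdie d'' hlt (heq.symm ▸ hy)
    by_cases hMax : MaximalZone M s' d
    · exact ⟨d, le_rfl, hd, hZE, hMax⟩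
    · unfold MaximalZone at hMax
      push_neg at hMax
      obtain ⟨d', hDd', hss⟩ := hMax
      have hd'd : d' < d := by
        rcases lt_trichotomy d' d with h | h | h
        · exact h
        · subst h; exact absurd hss (ssubset_irrefl _)
        · exact absurd (hss.1 hy) (hdie d' h)
      have hxd' : x ∈ EnSet M (addTime d' s') := hss.1 hxd
      have hd'pos : 0 < d' := by
        rcases Nat.eq_zero_or_pos d' with h | h
        · subst h; rw [addTime_zero] at hxd'; exact absurd hxd' hx0
        · exact h
      obtain ⟨u, hu, hunot⟩ := Set.exists_of_ssubset hss
      rcases u with ⟨j, t⟩ | j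
      · rw [mem_enset_inl, transEnabled_addTime] at hu
        obtain ⟨htj, hlj, hlo, hhi⟩ := hu
        have hdie' : t.hi < s'.clock j + d := by
          by_contra hc
          push_neg at hc
          exact hunot (mem_enset_inl.mpr (transEnabled_addTime.mpr
            ⟨htj, hlj, by omega, hc⟩))
        set e := t.hi - s'.clock j with he
        have h1 : d' ≤ e := by omega
        have h2 : e < d := by omega
        have hQ : ∃ y', y' ∈ EnSet M (addTime e s') ∧
            ∀ d'', e < d'' → y' ∉ EnSet M (addTime d'' s') := by
          refine ⟨Sum.inl (j, t), mem_enset_inl.mpr (transEnabled_addTime.mpr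
            ⟨htj, hlj, by omega, by omega⟩), fun d'' hlt hmem => ?_⟩
          rw [mem_enset_inl, transEnabled_addTime] at hmem
          omega
        obtain ⟨e', he1, he2, he3, he4⟩ := IH e h2 (by omega) (delayOK_mono hD (by omega))
          (enset_interval h1 (le_of_lt h2) hxd' hxd) hQ
        exact ⟨e', by omega, he2, he3, he4⟩
      · rw [mem_enset_inr, resetEnabled_addTime] at hu
        obtain ⟨hfj, hcj⟩ := hu
        have hQ : ∃ y', y' ∈ EnSet M (addTime d' s') ∧
            ∀ d'', d' < d'' → y' ∉ EnSet M (addTime d'' s') := by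
          refine ⟨Sum.inr j, mem_enset_inr.mpr ⟨hfj, hcj⟩, fun d'' hlt hmem => ?_⟩
          rw [mem_enset_inr, resetEnabled_addTime] at hmem
          omega
        obtain ⟨e', he1, he2, he3, he4⟩ := IH d' hd'd hd'pos hDd' hxd' hQ
        exact ⟨e', by omega, he2, he3, he4⟩

/-! ### The key lemma: a safe accelerated jump exists -/

theorem key_lemma (M : GMAPT n Val Loc) (s' : MState n Val Loc) (F : ℕ)
    (x : (Fin n × ATrans Val Loc) ⊕ Fin n)
    (hF : 1 ≤ F) (hD : DelayOK M s' F)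
    (hx : x ∈ EnSet M (addTime F s')) (hx0 : x ∉ EnSet M s') :
    ∃ δ, AccJump M s' δ ∧
      (∀ j, (s'.loc j = M.finalLoc j → s'.clock j + F ≤ M.period j →
          s'.clock j + δ ≤ M.period j) ∧
        (∀ u ∈ M.trans j, u.src = s'.loc j → u.lo ≤ u.hi → s'.clock j + F ≤ u.hi →
          s'.clock j + δ ≤ u.hi)) := by
  classical
  -- the set of "alive bound" distances
  set A : Set ℕ := {d | F ≤ d ∧ ∃ j, (s'.loc j = M.finalLoc j ∧ s'.clock j + d = M.period j) ∨
      ∃ u ∈ M.trans j, u.src = s'.loc j ∧ u.lo ≤ u.hi ∧ s'.clock j + d = u.hi} with hA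
  -- x provides an element of A at distance dx, with x enabled there
  have hAx : ∃ dx ∈ A, F ≤ dx ∧ x ∈ EnSet M (addTime dx s') := by
    rcases x with ⟨i, t⟩ | i
    · rw [mem_enset_inl, transEnabled_addTime] at hx
      obtain ⟨ht, hl, hlo, hhi⟩ := hx
      refine ⟨t.hi - s'.clock i, ⟨by omega, i, Or.inr ⟨t, ht, hl.symm, by omega, by omega⟩⟩,
        by omega, ?_⟩
      exact mem_enset_inl.mpr (transEnabled_addTime.mpr ⟨ht, hl, by omega, by omega⟩)
    · rw [mem_enset_inr, resetEnabled_addTime] at hx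
      obtain ⟨hl, hc⟩ := hx
      exact ⟨F, ⟨le_rfl, i, Or.inl ⟨hl, hc⟩⟩, le_rfl,
        mem_enset_inr.mpr (resetEnabled_addTime.mpr ⟨hl, hc⟩)⟩
  obtain ⟨dx, hdxA, hFdx, hxdx⟩ := hAx
  have hAne : A.Nonempty := ⟨dx, hdxA⟩
  set m := sInf A with hm
  have hmA : m ∈ A := Nat.sInf_mem hAne
  have hFm : F ≤ m := hmA.1
  have hmdx : m ≤ dx := Nat.sInf_le hdxA
  have hxm : ∀ e, F ≤ e → e ≤ m → x ∈ EnSet M (addTime e s') := fun e h1 h2 =>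
    enset_interval h1 (le_trans h2 hmdx) (by rwa [show F = F from rfl] at hx) hxdx
  -- produce some positive maximal zone end ≤ m
  have hMZ : ∃ e, e ≤ m ∧ 0 < e ∧ ZoneEnd M s' e ∧ MaximalZone M s' e := by
    by_cases hDm : DelayOK M s' m
    · -- find a dying witness at m from the realizer of the infimum
      obtain ⟨j, hj⟩ := hmA.2
      have hQ : ∃ y, y ∈ EnSet M (addTime m s') ∧
          ∀ d'', m < d'' → y ∉ EnSet M (addTime d'' s') := by
        rcases hj with ⟨hfj, hcj⟩ | ⟨u, hu, hsrc, hjunk, hcj⟩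
        · refine ⟨Sum.inr j, mem_enset_inr.mpr ⟨hfj, hcj⟩, fun d'' hlt hmem => ?_⟩
          rw [mem_enset_inr, resetEnabled_addTime] at hmem
          omega
        · refine ⟨Sum.inl (j, u), mem_enset_inl.mpr (transEnabled_addTime.mpr
            ⟨hu, hsrc.symm, by omega, by omega⟩), fun d'' hlt hmem => ?_⟩
          rw [mem_enset_inl, transEnabled_addTime] at hmem
          omega
      exact exists_max_zone_end M s' x hx0 m (by omega) hDm (hxm m hFm le_rfl) hQ
    · -- jump to the greatest delay with DelayOK
      set G := Nat.findGreatest (fun d => DelayOK M s' d) m with hG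
      have hFG : F ≤ G := Nat.le_findGreatest hFm hD
      have hGok : DelayOK M s' G := Nat.findGreatest_spec hFm hD
      have hGm : G < m := lt_of_le_of_ne (Nat.findGreatest_le m)
        (fun h => hDm (h ▸ hGok))
      have hnD : ∀ d', G < d' → ¬ DelayOK M s' d' := by
        intro d' h hD'
        rcases le_or_gt d' m with h2 | h2
        · exact Nat.findGreatest_is_greatest h h2 hD'
        · exact hDm (delayOK_mono hD' (le_of_lt h2))
      have hZG : ZoneEnd M s' G := ⟨hGok, fun d' h hD' _ => (hnD d' h hD').elim⟩
      by_cases hMG : MaximalZone M s' G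
      · exact ⟨G, le_of_lt hGm, by omega, hZG, hMG⟩
      · unfold MaximalZone at hMG
        push_neg at hMG
        obtain ⟨d', hDd', hss⟩ := hMG
        have hd'G : d' < G := by
          rcases lt_trichotomy d' G with h | h | h
          · exact h
          · subst h; exact absurd hss (ssubset_irrefl _)
          · exact absurd hDd' (hnD d' h)
        have hxG : x ∈ EnSet M (addTime G s') := hxm G hFG (le_of_lt hGm)
        have hxd' : x ∈ EnSet M (addTime d' s') := hss.1 hxG
        have hd'pos : 0 < d' := by
          rcases Nat.eq_zero_or_pos d' with h | h
          · subst h; rw [addTime_zero] at hxd'; exact absurd hxd' hx0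
          · exact h
        obtain ⟨u, hu, hunot⟩ := Set.exists_of_ssubset hss
        rcases u with ⟨j, t⟩ | j
        · rw [mem_enset_inl, transEnabled_addTime] at hu
          obtain ⟨htj, hlj, hlo, hhi⟩ := hu
          have hdie' : t.hi < s'.clock j + G := by
            by_contra hc
            push_neg at hc
            exact hunot (mem_enset_inl.mpr (transEnabled_addTime.mpr
              ⟨htj, hlj, by omega, hc⟩))
          set e := t.hi - s'.clock j with he
          have h1 : d' ≤ e := by omega
          have h2 : e < G := by omega
          have hQ : ∃ y, y ∈ EnSet M (addTime e s') ∧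
              ∀ d'', e < d'' → y ∉ EnSet M (addTime d'' s') := by
            refine ⟨Sum.inl (j, t), mem_enset_inl.mpr (transEnabled_addTime.mpr
              ⟨htj, hlj, by omega, by omega⟩), fun d'' hlt hmem => ?_⟩
            rw [mem_enset_inl, transEnabled_addTime] at hmem
            omega
          obtain ⟨e', he1, he2, he3, he4⟩ := exists_max_zone_end M s' x hx0 e
            (by omega) (delayOK_mono hGok (by omega))
            (enset_interval h1 (le_of_lt h2) hxd' hxG) hQ
          exact ⟨e', by omega, he2, he3, he4⟩
        · rw [mem_enset_inr, resetEnabled_addTime] at hu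
          obtain ⟨hfj, hcj⟩ := hu
          have hQ : ∃ y, y ∈ EnSet M (addTime d' s') ∧
              ∀ d'', d' < d'' → y ∉ EnSet M (addTime d'' s') := by
            refine ⟨Sum.inr j, mem_enset_inr.mpr ⟨hfj, hcj⟩, fun d'' hlt hmem => ?_⟩
            rw [mem_enset_inr, resetEnabled_addTime] at hmem
            omega
          obtain ⟨e', he1, he2, he3, he4⟩ :=
            exists_max_zone_end M s' x hx0 d' hd'pos hDd' hxd' hQ
          exact ⟨e', by omega, he2, he3, he4⟩
  obtain ⟨dstar, hdm, hdpos, hdZE, hdMZ⟩ := hMZ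
  have hP : ∃ dd, 0 < dd ∧ ZoneEnd M s' dd ∧ MaximalZone M s' dd :=
    ⟨dstar, hdpos, hdZE, hdMZ⟩
  set δ := Nat.find hP with hδdef
  have hδ := Nat.find_spec hP
  have hδm : δ ≤ m := le_trans (Nat.find_min' hP ⟨hdpos, hdZE, hdMZ⟩) hdm
  refine ⟨δ, ⟨hδ.1, hδ.2.1, hδ.2.2, fun d' h1 h2 hcon =>
    Nat.find_min hP h2 ⟨h1, hcon.1, hcon.2⟩⟩, fun j => ⟨fun hfin halive => ?_, ?_⟩⟩
  · have hmem : (M.period j - s'.clock j) ∈ A := ⟨by omega, j, Or.inl ⟨hfin, by omega⟩⟩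
    have := Nat.sInf_le hmem
    omega
  · intro u hu hsrc hjunk halive
    have hmem : (u.hi - s'.clock j) ∈ A :=
      ⟨by omega, j, Or.inr ⟨u, hu, hsrc, hjunk, by omega⟩⟩
    have := Nat.sInf_le hmem
    omega

end S14
namespace S14

variable {n : ℕ} {Val Loc : Type}

/-! ### Simulation invariant -/

def GoodS (M : GMAPT n Val Loc) (s : MState n Val Loc) : Prop :=
  ∀ i, (s.loc i = M.finalLoc i → s.clock i ≤ M.period i) ∧
    (s.loc i ≠ M.finalLoc i → ∃ t ∈ M.trans i, t.src = s.loc i ∧ s.clock i ≤ t.hi)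

def AS (M : GMAPT n Val Loc) (s s' : MState n Val Loc) : Prop :=
  ∀ i, (s.loc i = M.finalLoc i → s'.clock i ≤ M.period i) ∧
    (∀ t ∈ M.trans i, t.src = s.loc i → t.lo ≤ t.hi → s.clock i ≤ t.hi → s'.clock i ≤ t.hi)

def Sim (M : GMAPT n Val Loc) (s s' : MState n Val Loc) : Prop :=
  s'.loc = s.loc ∧ s'.v = s.v ∧
    (∃ E : ℤ, ∀ i, (s'.clock i : ℤ) = (s.clock i : ℤ) + E) ∧
    GoodS M s ∧ GoodS M s' ∧ AS M s s'

/-! ### Preservation of the invariant -/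

theorem sim_tick {M : GMAPT n Val Loc} {s s' : MState n Val Loc}
    (hWF : WellFormed M) (hsim : Sim M s s') (hTE : TimeEnabled M s) :
    Sim M (tickState s) s' := by
  obtain ⟨hloc, hv, ⟨E, hE⟩, hG, hG', hAS⟩ := hsim
  obtain ⟨hWF1, hWF2, hWF3, hWF4⟩ := hWF
  refine ⟨hloc, hv, ⟨E - 1, fun i => by have := hE i; simp only [tickState]; push_cast; omega⟩,
    ?_, hG', ?_⟩
  · intro i
    constructor
    · intro hf
      rcases hTE i with ⟨t, ht, hl, hc⟩ | ⟨hl, hc⟩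
      · exact absurd (hl.symm.trans hf) (hWF1 i t ht)
      · show s.clock i + 1 ≤ M.period i
        omega
    · intro hf
      rcases hTE i with ⟨t, ht, hl, hc⟩ | ⟨hl, hc⟩
      · exact ⟨t, ht, hl.symm, by show s.clock i + 1 ≤ t.hi; omega⟩
      · exact absurd hl hf
  · intro i
    refine ⟨(hAS i).1, fun t ht hsrc hjunk hcl => (hAS i).2 t ht hsrc hjunk ?_⟩
    have : s.clock i + 1 ≤ t.hi := hcl
    omega

theorem sim_fire {M : GMAPT n Val Loc} {s s' : MState n Val Loc}
    {i : Fin n} {t : ATrans Val Loc}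
    (hSL : StrongLiveness M) (hWF : WellFormed M)
    (hsim : Sim M s s') (hen : TransEnabled M i t s) (hen' : TransEnabled M i t s') :
    Sim M (fireTrans i t s) (fireTrans i t s') := by
  obtain ⟨hloc, hv, ⟨E, hE⟩, hG, hG', hAS⟩ := hsim
  obtain ⟨hSL1, hSL2, hSL3, hSL4⟩ := hSL
  obtain ⟨hWF1, hWF2, hWF3, hWF4⟩ := hWF
  obtain ⟨ht, hsrc, hlo, hhi⟩ := hen
  obtain ⟨_, hsrc', hlo', hhi'⟩ := hen'
  refine ⟨by simp only [fireTrans]; rw [hloc], by simp only [fireTrans]; rw [hv],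
    ⟨E, hE⟩, ?_, ?_, ?_⟩
  · -- GoodS for the new original state
    intro j
    by_cases hji : j = i
    · subst hji
      constructor
      · intro hf
        simp only [fireTrans, Function.update_self] at hf ⊢
        exact le_trans hhi (hSL4 j t ht hf)
      · intro hf
        simp only [fireTrans, Function.update_self] at hf ⊢
        obtain ⟨t', ht', hsrc2⟩ := hWF3 j t ht hf
        exact ⟨t', ht', hsrc2, le_trans hhi
          (hSL3 j t ht (hWF2 j t ht) hf t' ht' hsrc2)⟩
    · constructor
      · intro hf
        simp only [fireTrans, Function.update_of_ne hji] at hf ⊢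
        exact (hG j).1 hf
      · intro hf
        simp only [fireTrans, Function.update_of_ne hji] at hf ⊢
        exact (hG j).2 hf
  · -- GoodS for the new accelerated state
    intro j
    by_cases hji : j = i
    · subst hji
      constructor
      · intro hf
        simp only [fireTrans, Function.update_self] at hf ⊢
        exact le_trans hhi' (hSL4 j t ht hf)
      · intro hf
        simp only [fireTrans, Function.update_self] at hf ⊢
        obtain ⟨t', ht', hsrc2⟩ := hWF3 j t ht hf
        exact ⟨t', ht', hsrc2, le_trans hhi'
          (hSL3 j t ht (hWF2 j t ht) hf t' ht' hsrc2)⟩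
    · constructor
      · intro hf
        simp only [fireTrans, Function.update_of_ne hji] at hf ⊢
        exact (hG' j).1 hf
      · intro hf
        simp only [fireTrans, Function.update_of_ne hji] at hf ⊢
        exact (hG' j).2 hf
  · -- AS for the new pair
    intro j
    by_cases hji : j = i
    · subst hji
      constructor
      · intro hf
        simp only [fireTrans, Function.update_self] at hf ⊢
        exact le_trans hhi' (hSL4 j t ht hf)
      · intro t' ht' hsrc2 hjunk hcl
        simp only [fireTrans, Function.update_self] at hsrc2 ⊢
        by_cases hfin : t.dst = M.finalLoc j
        · exact absurd (hsrc2.trans hfin) (hWF1 j t' ht')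
        · exact le_trans hhi' (hSL3 j t ht (hWF2 j t ht) hfin t' ht' hsrc2)
    · constructor
      · intro hf
        simp only [fireTrans, Function.update_of_ne hji] at hf ⊢
        exact (hAS j).1 hf
      · intro t' ht' hsrc2 hjunk hcl
        simp only [fireTrans, Function.update_of_ne hji] at hsrc2 hcl ⊢
        exact (hAS j).2 t' ht' hsrc2 hjunk hcl

theorem sim_reset {M : GMAPT n Val Loc} {s s' : MState n Val Loc} {i : Fin n}
    (hWF : WellFormed M) (hsim : Sim M s s')
    (hen : ResetEnabled M i s) (hen' : ResetEnabled M i s') :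
    Sim M (fireReset M i s) (fireReset M i s') := by
  obtain ⟨hloc, hv, ⟨E, hE⟩, hG, hG', hAS⟩ := hsim
  obtain ⟨hWF1, hWF2, hWF3, hWF4⟩ := hWF
  have hE0 : E = 0 := by
    have := hE i
    have h1 : s.clock i = M.period i := hen.2
    have h2 : s'.clock i = M.period i := hen'.2
    omega
  subst hE0
  refine ⟨by simp only [fireReset]; rw [hloc], by simp only [fireReset]; rw [hv],
    ⟨0, fun j => ?_⟩, ?_, ?_, ?_⟩
  · by_cases hji : j = i
    · subst hji; simp only [fireReset, Function.update_self]; omega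
    · simp only [fireReset, Function.update_of_ne hji]
      have := hE j
      omega
  · intro j
    by_cases hji : j = i
    · subst hji
      constructor
      · intro _
        simp only [fireReset, Function.update_self]
        exact Nat.zero_le _
      · intro hf
        simp only [fireReset, Function.update_self] at hf ⊢
        obtain ⟨t, ht, hsrc⟩ := hWF4 j hf
        exact ⟨t, ht, hsrc, Nat.zero_le _⟩
    · constructor
      · intro hf
        simp only [fireReset, Function.update_of_ne hji] at hf ⊢
        exact (hG j).1 hf
      · intro hf
        simp only [fireReset, Function.update_of_ne hji] at hf ⊢
        exact (hG j).2 hf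
  · intro j
    by_cases hji : j = i
    · subst hji
      constructor
      · intro _
        simp only [fireReset, Function.update_self]
        exact Nat.zero_le _
      · intro hf
        simp only [fireReset, Function.update_self] at hf ⊢
        obtain ⟨t, ht, hsrc⟩ := hWF4 j hf
        exact ⟨t, ht, hsrc, Nat.zero_le _⟩
    · constructor
      · intro hf
        simp only [fireReset, Function.update_of_ne hji] at hf ⊢
        exact (hG' j).1 hf
      · intro hf
        simp only [fireReset, Function.update_of_ne hji] at hf ⊢
        exact (hG' j).2 hf
  · intro j
    by_cases hji : j = i
    · subst hji
      refine ⟨fun _ => ?_, fun t ht hsrc hjunk hcl => ?_⟩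
      · simp only [fireReset, Function.update_self]
        exact Nat.zero_le _
      · simp only [fireReset, Function.update_self]
        exact Nat.zero_le _
    · refine ⟨fun hf => ?_, fun t ht hsrc hjunk hcl => ?_⟩
      · simp only [fireReset, Function.update_of_ne hji] at hf ⊢
        exact (hAS j).1 hf
      · simp only [fireReset, Function.update_of_ne hji] at hsrc hcl ⊢
        exact (hAS j).2 t ht hsrc hjunk hcl

end S14
namespace S14

variable {n : ℕ} {Val Loc : Type}

theorem aevolution_append {M : GMAPT n Val Loc} :
    ∀ {w1 : List (AEv n Val Loc)} {w2 s s1 s2}, AEvolution M w1 s s1 →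
      AEvolution M w2 s1 s2 → AEvolution M (w1 ++ w2) s s2 := by
  intro w1
  induction w1 with
  | nil =>
    intro w2 s s1 s2 h1 h2
    exact (show s = s1 from h1) ▸ h2
  | cons e w ih =>
    rintro w2 s s1 s2 ⟨sm, hst, hev⟩ h2
    exact ⟨sm, hst, ih hev h2⟩

theorem evolution_append {M : GMAPT n Val Loc} :
    ∀ {w1 : List (Ev n Val Loc)} {w2 s s1 s2}, Evolution M w1 s s1 →
      Evolution M w2 s1 s2 → Evolution M (w1 ++ w2) s s2 := by
  intro w1
  induction w1 with
  | nil =>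
    intro w2 s s1 s2 h1 h2
    exact (show s = s1 from h1) ▸ h2
  | cons e w ih =>
    rintro w2 s s1 s2 ⟨sm, hst, hev⟩ h2
    exact ⟨sm, hst, ih hev h2⟩

/-- The jump loop for a pending transition of the original semantics. -/
theorem fire_loop {M : GMAPT n Val Loc} {i : Fin n} {t : ATrans Val Loc} :
    ∀ (k : ℕ) (s s' : MState n Val Loc), Sim M s s' → TransEnabled M i t s →
      t.lo ≤ s'.clock i + k →
      ∃ s'' w', AEvolution M w' s' s'' ∧ awordOf w' = ([] : List (Ev n Val Loc)) ∧
        Sim M s s'' ∧ TransEnabled M i t s'' := by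
  have base : ∀ (s s' : MState n Val Loc), Sim M s s' → TransEnabled M i t s →
      t.lo ≤ s'.clock i →
      ∃ s'' w', AEvolution M w' s' s'' ∧ awordOf w' = ([] : List (Ev n Val Loc)) ∧
        Sim M s s'' ∧ TransEnabled M i t s'' := by
    intro s s' hsim hen hlo
    obtain ⟨hloc, hv, hE, hG, hG', hAS⟩ := hsim
    refine ⟨s', [], rfl, rfl, ⟨hloc, hv, hE, hG, hG', hAS⟩, hen.1, ?_, hlo, ?_⟩
    · rw [hloc]; exact hen.2.1
    · exact (hAS i).2 t hen.1 hen.2.1.symm (le_trans hen.2.2.1 hen.2.2.2) hen.2.2.2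
  intro k
  induction k with
  | zero =>
    intro s s' hsim hen hk
    exact base s s' hsim hen (by omega)
  | succ k ih =>
    intro s s' hsim hen hk
    by_cases hlo : t.lo ≤ s'.clock i
    · exact base s s' hsim hen hlo
    · push_neg at hlo
      obtain ⟨hloc, hv, ⟨E, hE⟩, hG, hG', hAS⟩ := hsim
      have hci : s'.clock i < s.clock i := lt_of_lt_of_le hlo hen.2.2.1
      set F := s.clock i - s'.clock i with hFdef
      have hFpos : 1 ≤ F := by omega
      have hshift : ∀ j, s.clock j = s'.clock j + F := by
        intro j
        have h1 := hE i
        have h2 := hE j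
        omega
      have hD : DelayOK M s' F := by
        intro j
        constructor
        · intro hf
          have h := (hG j).1 (by rw [← hloc]; exact hf)
          have h2 := hshift j
          omega
        · intro hf
          obtain ⟨u, hu, hsrc, hle⟩ := (hG j).2 (by rw [← hloc]; exact hf)
          exact ⟨u, hu, by rw [hloc]; exact hsrc, by rw [← hshift j]; exact hle⟩
      have hx : (Sum.inl (i, t) : (Fin n × ATrans Val Loc) ⊕ Fin n) ∈
          EnSet M (addTime F s') := by
        refine mem_enset_inl.mpr (transEnabled_addTime.mpr
          ⟨hen.1, by rw [hloc]; exact hen.2.1, ?_, ?_⟩)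
        · rw [← hshift i]; exact hen.2.2.1
        · rw [← hshift i]; exact hen.2.2.2
      have hx0 : (Sum.inl (i, t) : (Fin n × ATrans Val Loc) ⊕ Fin n) ∉ EnSet M s' := by
        intro hmem
        rw [mem_enset_inl] at hmem
        exact absurd hmem.2.2.1 (by omega)
      obtain ⟨δ, hacc, hsafe⟩ := key_lemma M s' F _ hFpos hD hx hx0
      have hδpos : 0 < δ := hacc.1
      have hDδ : DelayOK M s' δ := hacc.2.1.1
      have hsim'' : Sim M s (addTime δ s') := by
        refine ⟨hloc, hv, ⟨E + (δ : ℤ), fun j => ?_⟩, hG, ?_, ?_⟩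
        · have := hE j
          simp only [addTime_clock]
          push_cast
          omega
        · intro j
          constructor
          · intro hf
            simp only [addTime_loc] at hf
            simp only [addTime_clock]
            exact (hDδ j).1 hf
          · intro hf
            simp only [addTime_loc] at hf
            obtain ⟨u, hu, hsrc, hle⟩ := (hDδ j).2 hf
            exact ⟨u, hu, hsrc, by simp only [addTime_clock]; exact hle⟩
        · intro j
          constructor
          · intro hf
            simp only [addTime_clock]
            refine (hsafe j).1 (by rw [hloc]; exact hf) ?_
            rw [← hshift j]
            exact (hG j).1 hf
          · intro u hu hsrc hjunk hcl
            simp only [addTime_clock]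
            refine (hsafe j).2 u hu (by rw [hloc]; exact hsrc) hjunk ?_
            rw [← hshift j]
            exact hcl
      have hk' : t.lo ≤ (addTime δ s').clock i + k := by
        simp only [addTime_clock]
        omega
      obtain ⟨s3, w', hev, hw, hsim3, hen3⟩ := ih s (addTime δ s') hsim'' hen hk'
      exact ⟨s3, .jump δ :: w', ⟨addTime δ s', ⟨hacc, rfl⟩, hev⟩,
        by simpa [awordOf] using hw, hsim3, hen3⟩

/-- The jump loop for a pending reset of the original semantics. -/
theorem reset_loop {M : GMAPT n Val Loc} {i : Fin n} :
    ∀ (k : ℕ) (s s' : MState n Val Loc), Sim M s s' → ResetEnabled M i s →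
      s.clock i ≤ s'.clock i + k →
      ∃ s'' w', AEvolution M w' s' s'' ∧ awordOf w' = ([] : List (Ev n Val Loc)) ∧
        Sim M s s'' ∧ ResetEnabled M i s'' := by
  have base : ∀ (s s' : MState n Val Loc), Sim M s s' → ResetEnabled M i s →
      s.clock i ≤ s'.clock i →
      ∃ s'' w', AEvolution M w' s' s'' ∧ awordOf w' = ([] : List (Ev n Val Loc)) ∧
        Sim M s s'' ∧ ResetEnabled M i s'' := by
    intro s s' hsim hen hle
    obtain ⟨hloc, hv, hE, hG, hG', hAS⟩ := hsim
    have h1 : s'.clock i ≤ M.period i := (hAS i).1 hen.1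
    have h2 : s.clock i = M.period i := hen.2
    refine ⟨s', [], rfl, rfl, ⟨hloc, hv, hE, hG, hG', hAS⟩, by rw [hloc]; exact hen.1, by omega⟩
  intro k
  induction k with
  | zero =>
    intro s s' hsim hen hk
    exact base s s' hsim hen (by omega)
  | succ k ih =>
    intro s s' hsim hen hk
    by_cases hle : s.clock i ≤ s'.clock i
    · exact base s s' hsim hen hle
    · push_neg at hle
      obtain ⟨hloc, hv, ⟨E, hE⟩, hG, hG', hAS⟩ := hsim
      set F := s.clock i - s'.clock i with hFdef
      have hFpos : 1 ≤ F := by omega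
      have hshift : ∀ j, s.clock j = s'.clock j + F := by
        intro j
        have h1 := hE i
        have h2 := hE j
        omega
      have hD : DelayOK M s' F := by
        intro j
        constructor
        · intro hf
          have h := (hG j).1 (by rw [← hloc]; exact hf)
          have h2 := hshift j
          omega
        · intro hf
          obtain ⟨u, hu, hsrc, hle2⟩ := (hG j).2 (by rw [← hloc]; exact hf)
          exact ⟨u, hu, by rw [hloc]; exact hsrc, by rw [← hshift j]; exact hle2⟩
      have hx : (Sum.inr i : (Fin n × ATrans Val Loc) ⊕ Fin n) ∈
          EnSet M (addTime F s') := by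
        refine mem_enset_inr.mpr (resetEnabled_addTime.mpr
          ⟨by rw [hloc]; exact hen.1, ?_⟩)
        rw [← hshift i]; exact hen.2
      have hx0 : (Sum.inr i : (Fin n × ATrans Val Loc) ⊕ Fin n) ∉ EnSet M s' := by
        intro hmem
        rw [mem_enset_inr] at hmem
        have := hmem.2
        have := hen.2
        omega
      obtain ⟨δ, hacc, hsafe⟩ := key_lemma M s' F _ hFpos hD hx hx0
      have hδpos : 0 < δ := hacc.1
      have hDδ : DelayOK M s' δ := hacc.2.1.1
      have hsim'' : Sim M s (addTime δ s') := by
        refine ⟨hloc, hv, ⟨E + (δ : ℤ), fun j => ?_⟩, hG, ?_, ?_⟩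
        · have := hE j
          simp only [addTime_clock]
          push_cast
          omega
        · intro j
          constructor
          · intro hf
            simp only [addTime_loc] at hf
            simp only [addTime_clock]
            exact (hDδ j).1 hf
          · intro hf
            simp only [addTime_loc] at hf
            obtain ⟨u, hu, hsrc, hle2⟩ := (hDδ j).2 hf
            exact ⟨u, hu, hsrc, by simp only [addTime_clock]; exact hle2⟩
        · intro j
          constructor
          · intro hf
            simp only [addTime_clock]
            refine (hsafe j).1 (by rw [hloc]; exact hf) ?_
            rw [← hshift j]
            exact (hG j).1 hf
          · intro u hu hsrc hjunk hcl
            simp only [addTime_clock]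
            refine (hsafe j).2 u hu (by rw [hloc]; exact hsrc) hjunk ?_
            rw [← hshift j]
            exact hcl
      have hsafei : s'.clock i + δ ≤ M.period i := by
        refine (hsafe i).1 (by rw [hloc]; exact hen.1) ?_
        rw [← hshift i]
        exact le_of_eq hen.2
      have hk' : s.clock i ≤ (addTime δ s').clock i + k := by
        simp only [addTime_clock]
        omega
      obtain ⟨s3, w', hev, hw, hsim3, hen3⟩ := ih s (addTime δ s') hsim'' hen hk'
      exact ⟨s3, .jump δ :: w', ⟨addTime δ s', ⟨hacc, rfl⟩, hev⟩,
        by simpa [awordOf] using hw, hsim3, hen3⟩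

end S14
namespace S14

variable {n : ℕ} {Val Loc : Type}

theorem wordOf_tick {w : List (Ev n Val Loc)} : wordOf (.tick :: w) = wordOf w := by
  simp [wordOf, isTick]

theorem wordOf_tr {w : List (Ev n Val Loc)} {i t} :
    wordOf (.tr i t :: w) = .tr i t :: wordOf w := by
  simp [wordOf, isTick]

theorem wordOf_rst {w : List (Ev n Val Loc)} {i} :
    wordOf (.rst i :: w) = .rst i :: wordOf w := by
  simp [wordOf, isTick]

theorem awordOf_append {w1 w2 : List (AEv n Val Loc)} :
    awordOf (w1 ++ w2) = awordOf w1 ++ awordOf w2 := by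
  simp [awordOf]

/-- Forward simulation: every evolution of the original semantics is matched, word
  for word, by an accelerated evolution. -/
theorem forward {M : GMAPT n Val Loc} (hSL : StrongLiveness M) (hWF : WellFormed M) :
    ∀ (w : List (Ev n Val Loc)) (s s1 : MState n Val Loc), Evolution M w s s1 →
      ∀ s', Sim M s s' →
      ∃ w' s1', AEvolution M w' s' s1' ∧ awordOf w' = wordOf w := by
  intro w
  induction w with
  | nil =>
    intro s s1 _ s' _
    exact ⟨[], s', rfl, rfl⟩
  | cons e w ih =>
    rintro s s1 ⟨sm, hstep, hev⟩ s' hsim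
    match e with
    | .tick =>
      obtain ⟨hTE, rfl⟩ := hstep
      have hsim' := sim_tick hWF hsim hTE
      obtain ⟨w', s1', hev', hw⟩ := ih _ _ hev s' hsim'
      exact ⟨w', s1', hev', by rw [hw, wordOf_tick]⟩
    | .tr i t =>
      obtain ⟨hen, rfl⟩ := hstep
      obtain ⟨s'', w0, hev0, hw0, hsim'', hen''⟩ :=
        fire_loop t.lo s s' hsim hen (Nat.le_add_left _ _)
      have hsimf := sim_fire hSL hWF hsim'' hen hen''
      obtain ⟨w', s1', hev', hw⟩ := ih _ _ hev _ hsimf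
      refine ⟨w0 ++ (.tr i t :: w'), s1',
        aevolution_append hev0 ⟨fireTrans i t s'', ⟨hen'', rfl⟩, hev'⟩, ?_⟩
      rw [awordOf_append, hw0, wordOf_tr]
      simpa [awordOf] using hw
    | .rst i =>
      obtain ⟨hen, rfl⟩ := hstep
      obtain ⟨s'', w0, hev0, hw0, hsim'', hen''⟩ :=
        reset_loop (s.clock i) s s' hsim hen (Nat.le_add_left _ _)
      have hsimf := sim_reset hWF hsim'' hen hen''
      obtain ⟨w', s1', hev', hw⟩ := ih _ _ hev _ hsimf
      refine ⟨w0 ++ (.rst i :: w'), s1',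
        aevolution_append hev0 ⟨fireReset M i s'', ⟨hen'', rfl⟩, hev'⟩, ?_⟩
      rw [awordOf_append, hw0, wordOf_rst]
      simpa [awordOf] using hw

/-- Ticks can realize any delay that satisfies `DelayOK`. -/
theorem delay_evolution {M : GMAPT n Val Loc} :
    ∀ (d : ℕ) (s : MState n Val Loc), DelayOK M s d →
      Evolution M (List.replicate d .tick) s (addTime d s) := by
  intro d
  induction d with
  | zero =>
    intro s _
    exact (addTime_zero s).symm
  | succ d ih =>
    intro s h
    have hTE : TimeEnabled M s := by
      intro i
      by_cases hf : s.loc i = M.finalLoc i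
      · right
        refine ⟨hf, ?_⟩
        have := (h i).1 hf
        omega
      · left
        obtain ⟨t, ht, hsrc, hd⟩ := (h i).2 hf
        exact ⟨t, ht, hsrc.symm, by omega⟩
    have htick : tickState s = addTime 1 s := rfl
    refine ⟨tickState s, ⟨hTE, rfl⟩, ?_⟩
    rw [htick]
    have hD : DelayOK M (addTime 1 s) d := by
      intro i
      constructor
      · intro hf
        simp only [addTime_loc] at hf
        have := (h i).1 hf
        simp only [addTime_clock]
        omega
      · intro hf
        simp only [addTime_loc] at hf
        obtain ⟨t, ht, hsrc, hd⟩ := (h i).2 hf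
        exact ⟨t, ht, hsrc, by simp only [addTime_clock]; omega⟩
    have := ih (addTime 1 s) hD
    rwa [addTime_addTime, Nat.add_comm 1 d] at this

/-- Backward direction: expanding jumps into ticks. -/
theorem backward {M : GMAPT n Val Loc} :
    ∀ (w : List (AEv n Val Loc)) (s s1 : MState n Val Loc), AEvolution M w s s1 →
      Evolution M (expandAll w) s s1 ∧ wordOf (expandAll w) = awordOf w := by
  intro w
  induction w with
  | nil =>
    intro s s1 h
    exact ⟨h, rfl⟩
  | cons e w ih =>
    rintro s s1 ⟨sm, hst, hev⟩
    obtain ⟨hev', hw⟩ := ih sm s1 hev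
    match e with
    | .tr i t =>
      exact ⟨⟨sm, hst, hev'⟩, by rw [show expandAll (.tr i t :: w) =
        .tr i t :: expandAll w from rfl, wordOf_tr, hw]; simp [awordOf]⟩
    | .rst i =>
      exact ⟨⟨sm, hst, hev'⟩, by rw [show expandAll (.rst i :: w) =
        .rst i :: expandAll w from rfl, wordOf_rst, hw]; simp [awordOf]⟩
    | .jump d =>
      obtain ⟨hacc, rfl⟩ := hst
      have hD : DelayOK M s d := hacc.2.1.1
      have h1 : Evolution M (List.replicate d .tick) s (addTime d s) :=
        delay_evolution d s hD
      have hexp : expandAll (.jump d :: w) = List.replicate d .tick ++ expandAll w := rfl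
      constructor
      · rw [hexp]
        exact evolution_append h1 hev'
      · rw [hexp]
        have : wordOf (List.replicate d (.tick : Ev n Val Loc)) = [] := by
          simp [wordOf, List.filter_replicate, isTick]
        rw [show wordOf (List.replicate d .tick ++ expandAll w) =
          wordOf (List.replicate d .tick) ++ wordOf (expandAll w) from
          List.filter_append .., this, hw]
        simp [awordOf]

theorem sim_init {M : GMAPT n Val Loc} (hSL : StrongLiveness M) :
    Sim M M.initState M.initState := by
  obtain ⟨hSL1, hSL2, _, _⟩ := hSL
  refine ⟨rfl, rfl, ⟨0, fun i => by omega⟩, ?_, ?_, ?_⟩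
  · intro i
    exact ⟨hSL1 i, fun hne => hSL2 i hne⟩
  · intro i
    exact ⟨hSL1 i, fun hne => hSL2 i hne⟩
  · intro i
    exact ⟨hSL1 i, fun t ht hsrc hjunk hcl => hcl⟩

end S14

/-- the original and accelerated semantics of a MAPT have the same
  abstracted dynamics: the same sets of untimed projections of evolutions from the
  initial state. -/
theorem stmt14 {W X : Type} [LinearOrder X] (M : GMAPT n (W × X) Loc)
    (hM : IsMAPT M) :
    {u : List (Ev n (W × X) Loc) |
      ∃ w s, Evolution M w M.initState s ∧ wordOf w = u} =
    {u : List (Ev n (W × X) Loc) |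
      ∃ w s, AEvolution M w M.initState s ∧ awordOf w = u} := by
  obtain ⟨hSL, hWF, _, _⟩ := hM
  ext u
  simp only [Set.mem_setOf_eq]
  constructor
  · rintro ⟨w, s, hev, rfl⟩
    obtain ⟨w', s1', hev', hw⟩ := S14.forward hSL hWF w _ _ hev _ (S14.sim_init hSL)
    exact ⟨w', s1', hev', hw⟩
  · rintro ⟨w, s, hev, rfl⟩
    obtain ⟨hev', hw⟩ := S14.backward w _ _ hev
    exact ⟨expandAll w, s, hev', hw⟩
end
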